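/- arXiv:2401.06512 — 4 statements merged into one kernel-verified Lean document; each statement's English description precedes it below -/
import Mathlib

section
/- Column deletion preserves strict saddlepoints (horizontal pivot rule): let A be an m×n matrix and suppose A[i][j] is an entry such that every row contains an entry at least as large as A[i][j]. If j' is a column with A[i][j'] < A[i][j], then no entry in column j' is a strict saddlepoint of A. -/
/-- `A i j` is a strict saddlepoint: strict maximum of its row and
strict minimum of its column. -/
def IsStrictSaddle {m n : ℕ} {α : Type*} [LinearOrder α]
    (A : Fin m → Fin n → α) (i : Fin m) (j : Fin n) : Prop :=
  (∀ j', j' ≠ j → A i j' < A i j) ∧ (∀ i', i' ≠ i → A i j < A i' j)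

/-- Column deletion preserves strict saddlepoints (horizontal pivot rule):
if every row contains an entry at least as large as `A i j` and
`A i j' < A i j`, then no entry in column `j'` is a strict saddlepoint. -/
theorem column_deletion_safe {m n : ℕ} {α : Type*} [LinearOrder α]
    (A : Fin m → Fin n → α) (i : Fin m) (j j' : Fin n)
    (hrows : ∀ k : Fin m, ∃ x : Fin n, A i j ≤ A k x)
    (hcol : A i j' < A i j) :
    ∀ k : Fin m, ¬ IsStrictSaddle A k j' := by
  intro k ⟨hrow, hmin⟩
  have hjj' : j ≠ j' := fun h => lt_irrefl _ (h ▸ hcol)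
  rcases eq_or_ne k i with rfl | hk
  · exact absurd (hrow j hjj') (not_lt.2 hcol.le)
  · -- A k j' ≥ A i j
    obtain ⟨x, hx⟩ := hrows k
    have h1 : A i j ≤ A k j' := by
      rcases eq_or_ne x j' with rfl | hx'
      · exact hx
      · exact hx.trans (hrow x hx').le
    exact absurd (hmin i hk.symm) (not_lt.2 (hcol.le.trans h1))
end

section
/- Row deletion preserves strict saddlepoints (vertical pivot rule): let A be an m×n matrix and suppose A[i][j] is an entry such that every column contains an entry at most as large as A[i][j]. If i' is a row with A[i'][j] > A[i][j], then no entry in row i' is a strict saddlepoint of A. -/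
/-- Row deletion preserves strict saddlepoints (vertical pivot rule):
if every column contains an entry at most as large as `A i j` and
`A i' j > A i j`, then no entry in row `i'` is a strict saddlepoint. -/
theorem row_deletion_safe {m n : ℕ} {α : Type*} [LinearOrder α]
    (A : Fin m → Fin n → α) (i i' : Fin m) (j : Fin n)
    (hcols : ∀ x : Fin n, ∃ k : Fin m, A k x ≤ A i j)
    (hrow : A i j < A i' j) :
    ∀ x : Fin n, ¬ IsStrictSaddle A i' x := by
  intro x ⟨hmax, hmin⟩
  obtain ⟨k, hk⟩ := hcols x
  have hxlt : A i' x < A i' j := by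
    rcases eq_or_ne k i' with rfl | hne
    · rcases eq_or_ne x j with rfl | hxj
      · exact lt_of_le_of_lt hk hrow
      · exact absurd ((hmax j (fun h => hxj h.symm)).trans (hk.trans_lt hrow)) (lt_irrefl _)
    · exact lt_of_lt_of_le (lt_of_lt_of_le (hmin k hne) hk) hrow.le
  have hxj : x ≠ j := fun h => absurd hxlt (h ▸ lt_irrefl _)
  exact absurd (hmax j (fun h => hxj h.symm)) (not_lt.mpr hxlt.le)
end

section
/- In the lower-bound hard distribution, if the distinguished entry t has value -1 then the matrix has a saddlepoint with value 0: let M be an n×n matrix (n ≥ 2) with all entries 0 except exactly one nonzero entry in each row, where in row r0 the nonzero entry equals -1 and in every other row the nonzero entry equals 2. Then M has a (non-strict) saddlepoint of value 0. -/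
/-- `M i j` is a (non-strict) saddlepoint. -/
def IsSaddle {n : ℕ} (M : Fin n → Fin n → ℤ) (i j : Fin n) : Prop :=
  (∀ j' : Fin n, M i j' ≤ M i j) ∧ (∀ i' : Fin n, M i j ≤ M i' j)

/-- Hard distribution, case `t = -1`: all entries are `0` except one
nonzero entry per row (in column `c r`), which equals `-1` in row `r0`
and `2` in every other row.  Then `M` has a saddlepoint of value `0`. -/
theorem hard_instance_neg_one_has_zero_saddle {n : ℕ} (hn : 2 ≤ n)
    (M : Fin n → Fin n → ℤ) (c : Fin n → Fin n) (r0 : Fin n)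
    (hval : ∀ r : Fin n, M r (c r) = if r = r0 then -1 else 2)
    (hzero : ∀ (r j : Fin n), j ≠ c r → M r j = 0) :
    ∃ i j : Fin n, IsSaddle M i j ∧ M i j = 0 := by
  have : Nontrivial (Fin n) := Fin.nontrivial_iff_two_le.mpr hn
  obtain ⟨j, hj⟩ := exists_ne (c r0)
  have h0 : M r0 j = 0 := hzero r0 j hj
  refine ⟨r0, j, ⟨?_, ?_⟩, h0⟩
  · intro j'
    rw [h0]
    by_cases h : j' = c r0
    · subst h; rw [hval r0, if_pos rfl]; norm_num
    · rw [hzero r0 j' h]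
  · intro i'
    rw [h0]
    by_cases h : j = c i'
    · have hi : i' ≠ r0 := by rintro rfl; exact hj h
      subst h; rw [hval i', if_neg hi]; norm_num
    · rw [hzero i' j h]
end

section
/- In the lower-bound hard distribution with t = 1: let M be an n×n matrix (n ≥ 2) with all entries 0 except exactly one nonzero entry per row; in row r0 the nonzero entry, located in column c0, equals 1, and in every other row the nonzero entry equals 2. Then M has a saddlepoint if and only if every row's nonzero entry lies in column c0, in which case the saddlepoint value is 1. -/
/-- Hard distribution, case `t = 1`: all entries are `0` except one
nonzero entry per row (in column `c r`), which equals `1` in row `r0`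
and `2` in every other row.  Then `M` has a saddlepoint iff all the
nonzero entries lie in column `c r0`, in which case every saddlepoint
has value `1`. -/
theorem hard_instance_one_saddle_iff {n : ℕ} (hn : 2 ≤ n)
    (M : Fin n → Fin n → ℤ) (c : Fin n → Fin n) (r0 : Fin n)
    (hval : ∀ r : Fin n, M r (c r) = if r = r0 then 1 else 2)
    (hzero : ∀ (r j : Fin n), j ≠ c r → M r j = 0) :
    ((∃ i j : Fin n, IsSaddle M i j) ↔ ∀ r : Fin n, c r = c r0) ∧
    (∀ i j : Fin n, IsSaddle M i j → M i j = 1) := by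
  have key : ∀ i j : Fin n, IsSaddle M i j → (∀ r, c r = j) ∧ M i j = 1 := by
    intro i j ⟨hrow, hcol⟩
    have h1 : (1:ℤ) ≤ M i j := by
      have := hrow (c i)
      rw [hval] at this
      split_ifs at this <;> omega
    have hall : ∀ r, c r = j := by
      intro r
      by_contra hne
      have := hcol r
      rw [hzero r j (fun h => hne h.symm)] at this
      omega
    have hr0 : M r0 j = 1 := by
      rw [← hall r0, hval]; simp
    have := hcol r0
    exact ⟨hall, by omega⟩
  refine ⟨⟨?_, ?_⟩, fun i j hs => (key i j hs).2⟩
  · rintro ⟨i, j, hs⟩ r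
    rw [(key i j hs).1 r, (key i j hs).1 r0]
  · intro hall
    refine ⟨r0, c r0, ?_, ?_⟩
    · intro j'
      rcases eq_or_ne j' (c r0) with h | h
      · rw [h]
      · rw [hzero r0 j' h, hval]; simp
    · intro i'
      rcases eq_or_ne i' r0 with h | h
      · rw [h]
      · rw [hval r0, ← hall i', hval i']
        simp [h]
end
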